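/- Assume (s₁ + 2rs₁a)^m = 1/(4r²s₂²a²) for an integer m ≥ 1. Then the vector v ∈ ℝ^(m+2) with coordinates v₀ = 1/(2rs₁s₂a), v₁ = 1/(2rs₁a), and v_{1+j} = (s₁ + 2rs₁a)^(m−j) for j = 1, …, m, satisfies A_m v = v, i.e., v is a fixed vector of A_m. -/

import Mathlib

/-! Check `A_m v = v` row by row, with `c = s₁(1 + 2ra)`. From index `2` on, `v` is geometric with
ratio `c`, and rows `3, …, m+1` merely shift it down by one and divide by `c`; row `0` is immediate.
Row `1` reduces to `s₁ + s₂ = s₁ s₂`. Row `2` sums the geometric tail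
`v₂ + ⋯ + v_{m+1} = (c^m - 1)/(c - 1)`; with `c^m = 1/(4r²s₂²a²)` and `s₁ + s₂ = s₁ s₂` it
becomes a polynomial identity. -/

/-- The (m+2)×(m+2) matrix A_m from the paper, rows/columns indexed 0,…,m+1. -/
noncomputable def Amat (s₁ s₂ r a : ℝ) (m : ℕ) : Matrix (Fin (m + 2)) (Fin (m + 2)) ℝ :=
  Matrix.of fun i j =>
    if i.val = 0 then
      (if j.val = 0 then 1 / 2 else if j.val = 1 then 1 / (2 * s₂) else 0)
    else if i.val = 1 then
      (if j.val = 0 then 1 / (1 + 2 * r * a)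
       else if j.val = 1 ∨ j.val = m + 1 then 1 / (s₁ + 2 * r * s₁ * a) else 0)
    else if i.val = 2 then
      (if 1 ≤ j.val then 1 / (s₂ + 2 * r * s₂ * a) else 0)
    else
      (if j.val + 1 = i.val then 1 / (s₁ + 2 * r * s₁ * a) else 0)

open Matrix

section
variable (s₁ s₂ r a : ℝ) {m : ℕ} (w : Fin (m + 2) → ℝ)

theorem Amat_mulVec_apply_zero :
    (Amat s₁ s₂ r a m *ᵥ w) 0 = w 0 / 2 + w 1 / (2 * s₂) := by
  have hrow : Amat s₁ s₂ r a m 0 = Pi.single 0 (1 / 2) + Pi.single 1 (1 / (2 * s₂)) := by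
    ext ⟨_ | _ | j, hj⟩ <;> simp only [Amat, Matrix.of_apply] <;> simp [← Fin.val_inj]
  simp only [Matrix.mulVec, hrow, add_dotProduct, single_dotProduct]
  ring

theorem Amat_mulVec_apply_one (hm : 1 ≤ m) :
    (Amat s₁ s₂ r a m *ᵥ w) 1 =
      w 0 / (1 + 2 * r * a) + (w 1 + w (Fin.last _)) / (s₁ + 2 * r * s₁ * a) := by
  have hrow : Amat s₁ s₂ r a m 1 = Pi.single 0 (1 / (1 + 2 * r * a)) +
      Pi.single 1 (1 / (s₁ + 2 * r * s₁ * a)) +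
      Pi.single (Fin.last _) (1 / (s₁ + 2 * r * s₁ * a)) := by
    ext ⟨_ | _ | j, hj⟩ <;> simp only [Amat, Matrix.of_apply] <;> simp [Pi.single_apply, ← Fin.val_inj]
    all_goals omega
  simp only [Matrix.mulVec, hrow, add_dotProduct, single_dotProduct]
  ring

theorem Amat_mulVec_apply_two (hm : 1 ≤ m) :
    (Amat s₁ s₂ r a m *ᵥ w) ⟨2, by omega⟩ =
      (∑ j : Fin (m + 1), w j.succ) / (s₂ + 2 * r * s₂ * a) := by
  simp [Matrix.mulVec, dotProduct, Fin.sum_univ_succ (n := m + 1), Amat, Finset.mul_sum,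
    div_eq_inv_mul]

theorem Amat_mulVec_apply_succ_of_two_le (k : ℕ) (hk : 2 ≤ k) (h : k + 1 < m + 2) :
    (Amat s₁ s₂ r a m *ᵥ w) ⟨k + 1, h⟩ = w ⟨k, by omega⟩ / (s₁ + 2 * r * s₁ * a) := by
  have hrow : Amat s₁ s₂ r a m ⟨k + 1, h⟩ =
      Pi.single ⟨k, by omega⟩ (1 / (s₁ + 2 * r * s₁ * a)) := by
    ext ⟨j, hj⟩
    simp only [Amat, Matrix.of_apply, Pi.single_apply, Fin.ext_iff]
    rw [if_neg (by omega), if_neg (by omega), if_neg (by omega)]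
    simp only [add_left_inj]
  simp only [Matrix.mulVec, hrow, single_dotProduct]
  ring

end

theorem sum_succ_eq_add_geom {m : ℕ} {x : ℝ} (hx : x ≠ 1) (w : Fin (m + 2) → ℝ)
    (hw : ∀ k : Fin (m + 2), 2 ≤ k.val → w k = x ^ (m + 1 - k.val)) :
    ∑ j : Fin (m + 1), w j.succ = w 1 + (x ^ m - 1) / (x - 1) := by
  rw [Fin.sum_univ_succ, ← geom_sum_eq hx, ← Finset.sum_range_reflect,
    ← Fin.sum_univ_eq_sum_range]
  congr 1
  refine Finset.sum_congr rfl fun k _ => ?_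
  rw [hw _ (by simp)]
  congr 1
  simp; omega

theorem stmt_3 (s₁ s₂ r a : ℝ) (hs₁ : 1 < s₁) (hs₂ : 1 < s₂)
    (hsum : 1 / s₁ + 1 / s₂ = 1) (hr : 0 < r) (ha : 0 < a)
    (m : ℕ) (hm : 1 ≤ m)
    (hmarkov : (s₁ + 2 * r * s₁ * a) ^ m = 1 / (4 * r ^ 2 * s₂ ^ 2 * a ^ 2))
    (v : Fin (m + 2) → ℝ)
    (hv0 : v 0 = 1 / (2 * r * s₁ * s₂ * a))
    (hv1 : v 1 = 1 / (2 * r * s₁ * a))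
    (hvj : ∀ k : Fin (m + 2), 2 ≤ k.val → v k = (s₁ + 2 * r * s₁ * a) ^ (m + 1 - k.val)) :
    (Amat s₁ s₂ r a m).mulVec v = v := by
  have hra : 0 < r * a := mul_pos hr ha
  have hc : 1 < s₁ + 2 * r * s₁ * a := by nlinarith
  have hs : s₁ + s₂ = s₁ * s₂ := by field_simp at hsum; linarith
  funext i
  rcases i with ⟨_ | _ | _ | k, hi⟩
  · rw [Fin.mk_zero, Amat_mulVec_apply_zero, hv0, hv1]
    field_simp
    ring
  · have hlast : v (Fin.last _) = 1 := by rw [hvj _ (by simp; omega)]; simp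
    rw [Fin.mk_one, Amat_mulVec_apply_one _ _ _ _ _ hm, hv0, hv1, hlast]
    field_simp
    linear_combination hs
  · have hv2 : (s₁ + 2 * r * s₁ * a) ^ (m + 1 - 2) =
        1 / (4 * r ^ 2 * s₂ ^ 2 * a ^ 2) / (s₁ + 2 * r * s₁ * a) := by
      rw [eq_div_iff (by positivity), ← pow_succ, ← hmarkov]; congr 1; omega
    rw [Amat_mulVec_apply_two _ _ _ _ _ hm, sum_succ_eq_add_geom hc.ne' _ hvj, hv1,
      hvj _ le_rfl, hmarkov, hv2]
    have hc₁ : s₁ * (1 + 2 * r * a) - 1 ≠ 0 := by linarith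
    field_simp
    linear_combination (2 - 4 * r * a * s₂) * hs
  · rw [Amat_mulVec_apply_succ_of_two_le _ _ _ _ _ _ (by omega), hvj _ (by simp),
      hvj _ (by simp), div_eq_iff (by positivity), ← pow_succ]
    congr 1
    simp only; omega
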